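/- arXiv:2507.06772 — 2 statements merged into one kernel-verified Lean document; each statement's English description precedes it below -/
import Mathlib

section
/- Let f : ℝⁿ → ℝ be differentiable with ∇f Lipschitz continuous with constant κ_lg > 0, and suppose ∇f(x) is s-sparse at the point x ∈ ℝⁿ. Let σ > 0 and v¹, …, v^p ∈ ℝⁿ with ‖vʲ‖ ≤ κ_bv for all j, let A ∈ ℝ^{p×n} be the matrix whose j-th row is (vʲ)ᵀ, and let y ∈ ℝ^p have entries yʲ = f(x + σvʲ) − f(x). Assume A has the s-sparse ℓ1-recovery property with constant c₁ > 0. Set ξ = (√p/2) κ_lg κ_bv² σ. Then every minimizer g of ‖g‖₁ over {g ∈ ℝⁿ : ‖Ag − σ⁻¹y‖ ≤ ξ} satisfies ‖g − ∇f(x)‖ ≤ (√p/2) c₁ κ_lg κ_bv² σ. -/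
open Filter Matrix MeasureTheory

/-- The map `x ↦ A x` from `ℝⁿ` to `ℝᵖ` with the Euclidean (`ℓ²`) structure. -/
noncomputable def mulVecE {p n : ℕ} (A : Matrix (Fin p) (Fin n) ℝ)
    (x : EuclideanSpace ℝ (Fin n)) : EuclideanSpace ℝ (Fin p) :=
  (WithLp.equiv 2 (Fin p → ℝ)).symm (A.mulVec ((WithLp.equiv 2 (Fin n → ℝ)) x))

/-- The `ℓ¹` norm on `ℝⁿ`. -/
noncomputable def oneNorm {n : ℕ} (x : EuclideanSpace ℝ (Fin n)) : ℝ :=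
  ∑ i, |x i|

/-- `x` is `s`-sparse: it has at most `s` nonzero entries. -/
def IsSparse {n : ℕ} (s : ℕ) (x : EuclideanSpace ℝ (Fin n)) : Prop :=
  (Finset.univ.filter fun i => x i ≠ 0).card ≤ s

/-- `A` has the `s`-sparse `ℓ¹`-recovery property with constant `c₁`:
for every `s`-sparse `x̂`, every `ξ ≥ 0`, and every `y` with `‖A x̂ − y‖ ≤ ξ`,
every minimizer of the `ℓ¹` norm over `{x : ‖A x − y‖ ≤ ξ}` is within `c₁ ξ`
of `x̂` in Euclidean norm. -/
def RecoveryProperty {p n : ℕ} (s : ℕ) (A : Matrix (Fin p) (Fin n) ℝ)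
    (c₁ : ℝ) : Prop :=
  ∀ xhat : EuclideanSpace ℝ (Fin n), IsSparse s xhat →
    ∀ ξ : ℝ, 0 ≤ ξ →
      ∀ y : EuclideanSpace ℝ (Fin p), ‖mulVecE A xhat - y‖ ≤ ξ →
        ∀ xstar : EuclideanSpace ℝ (Fin n), ‖mulVecE A xstar - y‖ ≤ ξ →
          (∀ x : EuclideanSpace ℝ (Fin n), ‖mulVecE A x - y‖ ≤ ξ →
            oneNorm xstar ≤ oneNorm x) →
          ‖xstar - xhat‖ ≤ c₁ * ξ

/-!
Row `j` of `A ∇f(x) − σ⁻¹ y` is the error `⟪∇f(x), vʲ⟫ − (f(x + σvʲ) − f(x))/σ` of a forward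
difference. By the descent lemma for the `κ_lg`-Lipschitz gradient it is at most
`κ_lg κ_bv² σ / 2` in absolute value, so `‖A ∇f(x) − σ⁻¹ y‖ ≤ ξ`: the sparse vector `∇f(x)` is
feasible, and the recovery property puts every `ℓ¹` minimizer within `c₁ ξ` of it.
-/

open scoped RealInnerProductSpace

section LipschitzGradient

variable {E : Type*} [NormedAddCommGroup E] [InnerProductSpace ℝ E] [CompleteSpace E]
  {f : E → ℝ} {g : E → E} {κ : ℝ}

theorem HasGradientAt.hasDerivAt_comp_add_smul {f' x u : E} {t : ℝ}
    (hf : HasGradientAt f f' (x + t • u)) :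
    HasDerivAt (fun s : ℝ => f (x + s • u)) ⟪f', u⟫ t := by
  have hline : HasDerivAt (fun s : ℝ => x + s • u) u t := by
    simpa using ((hasDerivAt_id t).smul_const u).const_add x
  exact (hf.hasFDerivAt.comp_hasDerivAt t hline).congr_deriv
    (InnerProductSpace.toDual_apply_apply ..)

theorem abs_sub_sub_inner_le_of_lipschitz_gradient (hf : ∀ z, HasGradientAt f (g z) z)
    (hlip : ∀ a b, ‖g a - g b‖ ≤ κ * ‖a - b‖) (x u : E) :
    |f (x + u) - f x - ⟪g x, u⟫| ≤ κ / 2 * ‖u‖ ^ 2 := by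
  -- Fence `φ` by `κ/2 ‖u‖² t²` on `[0, 1]`: both vanish at `0` and `|φ'| ≤ κ ‖u‖² t`.
  set φ : ℝ → ℝ := fun t => f (x + t • u) - f x - t * ⟪g x, u⟫
  have hφ : ∀ t, HasDerivAt φ ⟪g (x + t • u) - g x, u⟫ t := fun t => by
    rw [inner_sub_left]
    exact ((hf (x + t • u)).hasDerivAt_comp_add_smul.sub_const (f x)).sub
      (hasDerivAt_mul_const ⟪g x, u⟫)
  have hB : ∀ t, HasDerivAt (fun t : ℝ => κ / 2 * ‖u‖ ^ 2 * t ^ 2) (κ * ‖u‖ ^ 2 * t) t :=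
    fun t => ((hasDerivAt_pow 2 t).const_mul (κ / 2 * ‖u‖ ^ 2)).congr_deriv (by ring)
  have hbound : ∀ t ∈ Set.Ico (0 : ℝ) 1, ‖⟪g (x + t • u) - g x, u⟫‖ ≤ κ * ‖u‖ ^ 2 * t := by
    intro t ht
    calc ‖⟪g (x + t • u) - g x, u⟫‖ ≤ ‖g (x + t • u) - g x‖ * ‖u‖ := norm_inner_le_norm _ _
      _ ≤ κ * ‖t • u‖ * ‖u‖ := by gcongr; simpa using hlip (x + t • u) x
      _ = κ * ‖u‖ ^ 2 * t := by rw [norm_smul, Real.norm_of_nonneg ht.1]; ring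
  have := image_norm_le_of_norm_deriv_right_le_deriv_boundary
    (fun t _ => (hφ t).continuousAt.continuousWithinAt) (fun t _ => (hφ t).hasDerivWithinAt)
    (by simp [φ]) hB hbound (Set.right_mem_Icc.2 zero_le_one)
  simpa [φ] using this

theorem abs_inv_mul_sub_sub_inner_le_of_lipschitz_gradient
    (hf : ∀ z, HasGradientAt f (g z) z) (hlip : ∀ a b, ‖g a - g b‖ ≤ κ * ‖a - b‖)
    (x v : E) {σ : ℝ} (hσ : 0 < σ) :
    |σ⁻¹ * (f (x + σ • v) - f x) - ⟪g x, v⟫| ≤ κ / 2 * σ * ‖v‖ ^ 2 := by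
  have h := abs_sub_sub_inner_le_of_lipschitz_gradient hf hlip x (σ • v)
  rw [real_inner_smul_right, norm_smul, Real.norm_of_nonneg hσ.le] at h
  calc |σ⁻¹ * (f (x + σ • v) - f x) - ⟪g x, v⟫|
      = σ⁻¹ * |f (x + σ • v) - f x - σ * ⟪g x, v⟫| := by
        rw [← abs_of_pos (inv_pos.2 hσ), ← abs_mul, abs_of_pos (inv_pos.2 hσ)]
        congr 1; field_simp
    _ ≤ σ⁻¹ * (κ / 2 * (σ * ‖v‖) ^ 2) := by gcongr
    _ = κ / 2 * σ * ‖v‖ ^ 2 := by field_simp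

end LipschitzGradient

theorem EuclideanSpace.norm_le_sqrt_card_mul {𝕜 ι : Type*} [RCLike 𝕜] [Fintype ι]
    (w : EuclideanSpace 𝕜 ι) {b : ℝ} (hb : 0 ≤ b) (h : ∀ i, ‖w i‖ ≤ b) :
    ‖w‖ ≤ √(Fintype.card ι) * b := by
  calc ‖w‖ = √(∑ i, ‖w i‖ ^ 2) := EuclideanSpace.norm_eq w
    _ ≤ √(∑ _ : ι, b ^ 2) := by gcongr with i; exact h i
    _ = √(Fintype.card ι) * b := by
      rw [Finset.sum_const, Finset.card_univ, nsmul_eq_mul, Real.sqrt_mul (Nat.cast_nonneg _),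
        Real.sqrt_sq hb]

theorem mulVecE_apply {p n : ℕ} (A : Matrix (Fin p) (Fin n) ℝ) (z : EuclideanSpace ℝ (Fin n))
    (j : Fin p) : mulVecE A z j = ∑ i, A j i * z i := rfl

theorem mulVecE_apply_eq_inner {p n : ℕ} {A : Matrix (Fin p) (Fin n) ℝ}
    {v : Fin p → EuclideanSpace ℝ (Fin n)} (hA : ∀ j i, A j i = v j i)
    (z : EuclideanSpace ℝ (Fin n)) (j : Fin p) : mulVecE A z j = ⟪z, v j⟫ := by
  simp [mulVecE_apply, hA, PiLp.inner_apply]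

theorem sparse_gradient_model_accuracy_general {n p : ℕ}
    (f : EuclideanSpace ℝ (Fin n) → ℝ)
    (g : EuclideanSpace ℝ (Fin n) → EuclideanSpace ℝ (Fin n))
    (hf : ∀ z, HasGradientAt f (g z) z)
    (κlg : ℝ) (hκlg : 0 < κlg)
    (hlip : ∀ y z, ‖g y - g z‖ ≤ κlg * ‖y - z‖)
    (s : ℕ) (x : EuclideanSpace ℝ (Fin n)) (hsparse : IsSparse s (g x))
    (σ : ℝ) (hσ : 0 < σ)
    (v : Fin p → EuclideanSpace ℝ (Fin n)) (κbv : ℝ)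
    (hv : ∀ j, ‖v j‖ ≤ κbv)
    (A : Matrix (Fin p) (Fin n) ℝ) (hA : ∀ j i, A j i = v j i)
    (y : EuclideanSpace ℝ (Fin p)) (hy : ∀ j, y j = f (x + σ • v j) - f x)
    (c₁ : ℝ) (hrec : RecoveryProperty s A c₁)
    (ξ : ℝ) (hξ : ξ = (Real.sqrt p / 2) * κlg * κbv ^ 2 * σ)
    (gsol : EuclideanSpace ℝ (Fin n))
    (hfeas : ‖mulVecE A gsol - σ⁻¹ • y‖ ≤ ξ)
    (hmin : ∀ g' : EuclideanSpace ℝ (Fin n), ‖mulVecE A g' - σ⁻¹ • y‖ ≤ ξ →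
      oneNorm gsol ≤ oneNorm g') :
    ‖gsol - g x‖ ≤ (Real.sqrt p / 2) * c₁ * κlg * κbv ^ 2 * σ := by
  have hcoord : ∀ j, ‖(mulVecE A (g x) - σ⁻¹ • y) j‖ ≤ κlg / 2 * σ * κbv ^ 2 := fun j => by
    rw [PiLp.sub_apply, PiLp.smul_apply, mulVecE_apply_eq_inner hA, hy, smul_eq_mul,
      Real.norm_eq_abs, abs_sub_comm]
    calc _ ≤ κlg / 2 * σ * ‖v j‖ ^ 2 :=
          abs_inv_mul_sub_sub_inner_le_of_lipschitz_gradient hf hlip x (v j) hσ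
      _ ≤ κlg / 2 * σ * κbv ^ 2 := by gcongr; exact hv j
  have hgrad_feasible : ‖mulVecE A (g x) - σ⁻¹ • y‖ ≤ ξ := by
    have := EuclideanSpace.norm_le_sqrt_card_mul _ (by positivity) hcoord
    rw [Fintype.card_fin] at this
    exact this.trans_eq (by rw [hξ]; ring)
  have hξ0 : 0 ≤ ξ := (norm_nonneg _).trans hgrad_feasible
  calc ‖gsol - g x‖ ≤ c₁ * ξ := hrec (g x) hsparse ξ hξ0 _ hgrad_feasible gsol hfeas hmin
    _ = _ := by rw [hξ]; ring

/-- Accuracy of the sparse gradient model obtained by `ℓ¹` minimization: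
every `ℓ¹` minimizer `gsol` over `{g : ‖A g − σ⁻¹ y‖ ≤ ξ}` with
`ξ = (√p/2) κlg κbv² σ` satisfies `‖gsol − ∇f(x)‖ ≤ (√p/2) c₁ κlg κbv² σ`. -/
theorem sparse_gradient_model_accuracy {n p : ℕ}
    (f : EuclideanSpace ℝ (Fin n) → ℝ)
    (g : EuclideanSpace ℝ (Fin n) → EuclideanSpace ℝ (Fin n))
    (hf : ∀ z, HasGradientAt f (g z) z)
    (κlg : ℝ) (hκlg : 0 < κlg)
    (hlip : ∀ y z, ‖g y - g z‖ ≤ κlg * ‖y - z‖)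
    (s : ℕ) (x : EuclideanSpace ℝ (Fin n)) (hsparse : IsSparse s (g x))
    (σ : ℝ) (hσ : 0 < σ)
    (v : Fin p → EuclideanSpace ℝ (Fin n)) (κbv : ℝ)
    (hv : ∀ j, ‖v j‖ ≤ κbv)
    (A : Matrix (Fin p) (Fin n) ℝ) (hA : ∀ j i, A j i = v j i)
    (y : EuclideanSpace ℝ (Fin p)) (hy : ∀ j, y j = f (x + σ • v j) - f x)
    (c₁ : ℝ) (hc₁ : 0 < c₁) (hrec : RecoveryProperty s A c₁)
    (ξ : ℝ) (hξ : ξ = (Real.sqrt p / 2) * κlg * κbv ^ 2 * σ)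
    (gsol : EuclideanSpace ℝ (Fin n))
    (hfeas : ‖mulVecE A gsol - σ⁻¹ • y‖ ≤ ξ)
    (hmin : ∀ g' : EuclideanSpace ℝ (Fin n), ‖mulVecE A g' - σ⁻¹ • y‖ ≤ ξ →
      oneNorm gsol ≤ oneNorm g') :
    ‖gsol - g x‖ ≤ (Real.sqrt p / 2) * c₁ * κlg * κbv ^ 2 * σ :=
  sparse_gradient_model_accuracy_general f g hf κlg hκlg hlip s x hsparse σ hσ v κbv hv A hA y hy c₁
    hrec ξ hξ gsol hfeas hmin
end

section
/- Let F : ℝⁿ → ℝᵐ be differentiable with Jacobian J, and suppose ‖J(y) − J(z)‖ ≤ κ_lj‖y − z‖, ‖J(y)‖ ≤ κ_lf and ‖F(y)‖ ≤ κ_bf for all y, z ∈ ℝⁿ. Let x ∈ ℝⁿ, θ > 0, and let J_m ∈ ℝ^{m×n} satisfy ‖J_m‖ ≤ κ_bmj and ‖J_m − J(x)‖ ≤ κ_ej/θ. Then for every d ∈ ℝⁿ, |‖F(x) + J_m d‖² − ‖F(x + d)‖²| ≤ (κ_lj κ_bf + κ_lf²)‖d‖² + 2κ_bf κ_ej θ⁻¹‖d‖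 + κ_bmj²‖d‖². -/
/-!
Along the segment `t ↦ x + t • d`, the function `g t = ‖F (x + t • d)‖ ^ 2` has derivative
`2 ⟪F, J d⟫`, which is Lipschitz in `t` with constant `2 (κlj κbf + κlf²) ‖d‖²`: split its
increment as `⟪ΔF, J d⟫ + ⟪F x, (ΔJ) d⟫`, where `F` is `κlf`-Lipschitz by the mean value theorem.
Hence `g 1` is within `(κlj κbf + κlf²) ‖d‖²` of the linearization `‖F x‖² + 2 ⟪F x, J x d⟫`,
while `‖F x + Jm d‖²` differs from it by `2 ⟪F x, (Jm - J x) d⟫ + ‖Jm d‖²`.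
-/

open Filter Matrix MeasureTheory

/-- The spectral norm (ℓ²-operator norm) of a matrix. -/
noncomputable def opNorm {p n : ℕ} (A : Matrix (Fin p) (Fin n) ℝ) : ℝ :=
  sSup {r : ℝ | ∃ x : EuclideanSpace ℝ (Fin n), ‖x‖ ≤ 1 ∧ r = ‖mulVecE A x‖}

/-- A matrix as a continuous linear map between Euclidean spaces. -/
noncomputable def jacCLM {p n : ℕ} (A : Matrix (Fin p) (Fin n) ℝ) :
    EuclideanSpace ℝ (Fin n) →L[ℝ] EuclideanSpace ℝ (Fin p) :=
  LinearMap.toContinuousLinearMap (Matrix.toEuclideanLin A)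

section Matrix

variable {p n : ℕ}

theorem jacCLM_apply (A : Matrix (Fin p) (Fin n) ℝ) (v : EuclideanSpace ℝ (Fin n)) :
    jacCLM A v = mulVecE A v :=
  rfl

theorem jacCLM_sub (A B : Matrix (Fin p) (Fin n) ℝ) : jacCLM (A - B) = jacCLM A - jacCLM B := by
  simp only [jacCLM, map_sub]

theorem opNorm_eq_norm_jacCLM (A : Matrix (Fin p) (Fin n) ℝ) : opNorm A = ‖jacCLM A‖ := by
  rw [← (jacCLM A).sSup_unitClosedBall_eq_norm, opNorm]
  congr 1
  ext r
  simp [jacCLM_apply, eq_comm]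

end Matrix

theorem norm_sub_sub_deriv_le_of_norm_deriv_sub_le {E : Type*} [NormedAddCommGroup E]
    [NormedSpace ℝ E] {g g' : ℝ → E} {L : ℝ} (hg : ∀ t ∈ Set.Icc (0 : ℝ) 1, HasDerivAt g (g' t) t)
    (hg' : ∀ t ∈ Set.Ico (0 : ℝ) 1, ‖g' t - g' 0‖ ≤ L * t) :
    ‖g 1 - g 0 - g' 0‖ ≤ L / 2 := by
  set r : ℝ → E := fun t => g t - g 0 - t • g' 0
  have hr : ∀ t ∈ Set.Icc (0 : ℝ) 1, HasDerivAt r (g' t - g' 0) t := fun t ht =>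
    (((hg t ht).sub_const (g 0)).sub ((hasDerivAt_id t).smul_const (g' 0))).congr_deriv (by simp)
  have hB : ∀ t, HasDerivAt (fun t => L / 2 * t ^ 2) (L * t) t := fun t =>
    ((hasDerivAt_pow 2 t).const_mul (L / 2)).congr_deriv (by norm_num; ring)
  have := image_norm_le_of_norm_deriv_right_le_deriv_boundary
    (fun t ht => (hr t ht).continuousAt.continuousWithinAt)
    (fun t ht => (hr t (Set.Ico_subset_Icc_self ht)).hasDerivWithinAt) (by simp [r]) hB hg'
    (Set.right_mem_Icc.2 zero_le_one)
  simpa [r] using this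

theorem abs_norm_add_sq_sub_le {F : Type*} [NormedAddCommGroup F] [InnerProductSpace ℝ F]
    (u v w : F) :
    |‖u + v‖ ^ 2 - ‖u‖ ^ 2 - 2 * inner ℝ u w| ≤ 2 * ‖u‖ * ‖v - w‖ + ‖v‖ ^ 2 := by
  have hsplit : ‖u + v‖ ^ 2 - ‖u‖ ^ 2 - 2 * inner ℝ u w = 2 * inner ℝ u (v - w) + ‖v‖ ^ 2 := by
    rw [norm_add_sq_real, inner_sub_right]
    ring
  rw [hsplit]
  calc |2 * inner ℝ u (v - w) + ‖v‖ ^ 2| ≤ |2 * inner ℝ u (v - w)| + |‖v‖ ^ 2| := abs_add_le _ _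
    _ ≤ 2 * (‖u‖ * ‖v - w‖) + ‖v‖ ^ 2 := by
      rw [abs_mul, abs_two, abs_of_nonneg (sq_nonneg ‖v‖)]
      gcongr
      exact abs_real_inner_le_norm _ _
    _ = 2 * ‖u‖ * ‖v - w‖ + ‖v‖ ^ 2 := by ring

section LipschitzJacobian

variable {E F : Type*} [NormedAddCommGroup E] [NormedSpace ℝ E] [NormedAddCommGroup F]
  [InnerProductSpace ℝ F] {f : E → F} {f' : E → E →L[ℝ] F} {L K B : ℝ}

theorem abs_inner_apply_deriv_sub_le (hf : ∀ z, HasFDerivAt f (f' z) z)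
    (hlip : ∀ y z, ‖f' y - f' z‖ ≤ L * ‖y - z‖) (hK : ∀ y, ‖f' y‖ ≤ K) (hB : ∀ y, ‖f y‖ ≤ B)
    (y z d : E) :
    |inner ℝ (f y) (f' y d) - inner ℝ (f z) (f' z d)| ≤ (L * B + K ^ 2) * ‖y - z‖ * ‖d‖ := by
  have hf_lip : ‖f y - f z‖ ≤ K * ‖y - z‖ :=
    convex_univ.norm_image_sub_le_of_norm_hasFDerivWithin_le
      (fun w _ => (hf w).hasFDerivWithinAt) (fun w _ => hK w) (Set.mem_univ z) (Set.mem_univ y)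
  have hsplit : inner ℝ (f y) (f' y d) - inner ℝ (f z) (f' z d)
      = inner ℝ (f y - f z) (f' y d) + inner ℝ (f z) ((f' y - f' z) d) := by
    rw [inner_sub_left, _root_.sub_apply, inner_sub_right]
    ring
  have hK₀ : 0 ≤ K := (norm_nonneg _).trans (hK y)
  have h₁ : |inner ℝ (f y - f z) (f' y d)| ≤ K * ‖y - z‖ * (K * ‖d‖) :=
    (abs_real_inner_le_norm _ _).trans <| mul_le_mul hf_lip ((f' y).le_of_opNorm_le (hK y) d)
      (norm_nonneg _) (by positivity)
  have h₂ : |inner ℝ (f z) ((f' y - f' z) d)| ≤ B * (L * ‖y - z‖ * ‖d‖) :=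
    (abs_real_inner_le_norm _ _).trans <| mul_le_mul (hB z)
      ((f' y - f' z).le_of_opNorm_le (hlip y z) d) (norm_nonneg _) ((norm_nonneg _).trans (hB z))
  calc _ ≤ |inner ℝ (f y - f z) (f' y d)| + |inner ℝ (f z) ((f' y - f' z) d)| :=
        hsplit ▸ abs_add_le _ _
    _ ≤ K * ‖y - z‖ * (K * ‖d‖) + B * (L * ‖y - z‖ * ‖d‖) := add_le_add h₁ h₂
    _ = (L * B + K ^ 2) * ‖y - z‖ * ‖d‖ := by ring

theorem abs_norm_sq_add_sub_le (hf : ∀ z, HasFDerivAt f (f' z) z)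
    (hlip : ∀ y z, ‖f' y - f' z‖ ≤ L * ‖y - z‖) (hK : ∀ y, ‖f' y‖ ≤ K) (hB : ∀ y, ‖f y‖ ≤ B)
    (x d : E) :
    |‖f (x + d)‖ ^ 2 - ‖f x‖ ^ 2 - 2 * inner ℝ (f x) (f' x d)| ≤ (L * B + K ^ 2) * ‖d‖ ^ 2 := by
  have hpath : ∀ t : ℝ, HasDerivAt (fun s : ℝ => ‖f (x + s • d)‖ ^ 2)
      (2 * inner ℝ (f (x + t • d)) (f' (x + t • d) d)) t := fun t =>
    ((hf _).comp_hasDerivAt t (((hasDerivAt_id t).smul_const d).const_add x) |>.congr_deriv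
      (by simp)).norm_sq
  have hderiv : ∀ t ∈ Set.Ico (0 : ℝ) 1,
      ‖2 * inner ℝ (f (x + t • d)) (f' (x + t • d) d) - 2 * inner ℝ (f (x + (0 : ℝ) • d))
        (f' (x + (0 : ℝ) • d) d)‖ ≤ 2 * ((L * B + K ^ 2) * ‖d‖ ^ 2) * t := by
    intro t ht
    have := abs_inner_apply_deriv_sub_le hf hlip hK hB (x + t • d) x d
    rw [add_sub_cancel_left, norm_smul, Real.norm_of_nonneg ht.1] at this
    rw [Real.norm_eq_abs, ← mul_sub, abs_mul, abs_two, zero_smul, add_zero]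
    linarith
  simpa using norm_sub_sub_deriv_le_of_norm_deriv_sub_le (fun t _ => hpath t) hderiv

end LipschitzJacobian

theorem model_error_bound_general {n m : ℕ}
    (F : EuclideanSpace ℝ (Fin n) → EuclideanSpace ℝ (Fin m))
    (J : EuclideanSpace ℝ (Fin n) → Matrix (Fin m) (Fin n) ℝ)
    (hF : ∀ z, HasFDerivAt F (jacCLM (J z)) z)
    (κlj κlf κbf : ℝ)
    (hJlip : ∀ y z, opNorm (J y - J z) ≤ κlj * ‖y - z‖)
    (hJb : ∀ y, opNorm (J y) ≤ κlf)
    (hFb : ∀ y, ‖F y‖ ≤ κbf)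
    (x : EuclideanSpace ℝ (Fin n)) (θ : ℝ)
    (Jm : Matrix (Fin m) (Fin n) ℝ) (κbmj κej : ℝ)
    (hJmb : opNorm Jm ≤ κbmj)
    (hJmacc : opNorm (Jm - J x) ≤ κej / θ) :
    ∀ d : EuclideanSpace ℝ (Fin n),
      |‖F x + mulVecE Jm d‖ ^ 2 - ‖F (x + d)‖ ^ 2| ≤
        (κlj * κbf + κlf ^ 2) * ‖d‖ ^ 2 + 2 * κbf * κej * θ⁻¹ * ‖d‖ +
          κbmj ^ 2 * ‖d‖ ^ 2 := by
  intro d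
  simp only [opNorm_eq_norm_jacCLM, jacCLM_sub] at hJlip hJb hJmb hJmacc
  have hmodel := abs_norm_add_sq_sub_le (F x) (mulVecE Jm d) (jacCLM (J x) d)
  have htaylor := abs_norm_sq_add_sub_le hF hJlip hJb hFb x d
  have hJmd : ‖mulVecE Jm d‖ ≤ κbmj * ‖d‖ := (jacCLM Jm).le_of_opNorm_le hJmb d
  have hJmd_sub : ‖mulVecE Jm d - jacCLM (J x) d‖ ≤ κej / θ * ‖d‖ :=
    (jacCLM Jm - jacCLM (J x)).le_of_opNorm_le hJmacc d
  set P := ‖F x‖ ^ 2 + 2 * inner ℝ (F x) (jacCLM (J x) d)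
  calc _ = |(‖F x + mulVecE Jm d‖ ^ 2 - P) - (‖F (x + d)‖ ^ 2 - P)| := by congr 1; ring
    _ ≤ |‖F x + mulVecE Jm d‖ ^ 2 - P| + |‖F (x + d)‖ ^ 2 - P| := abs_sub _ _
    _ ≤ (2 * ‖F x‖ * ‖mulVecE Jm d - jacCLM (J x) d‖ + ‖mulVecE Jm d‖ ^ 2)
        + (κlj * κbf + κlf ^ 2) * ‖d‖ ^ 2 := by
        simp only [P, ← sub_sub]
        exact add_le_add hmodel htaylor
    _ ≤ (2 * κbf * (κej / θ * ‖d‖) + (κbmj * ‖d‖) ^ 2) + (κlj * κbf + κlf ^ 2) * ‖d‖ ^ 2 := by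
        have hκbf : 0 ≤ κbf := (norm_nonneg _).trans (hFb x)
        gcongr
        exact hFb x
    _ = _ := by ring

/-- Model error bound: for a first-order accurate Jacobian model `Jm`,
`|‖F(x) + Jm d‖² − ‖F(x+d)‖²|` is bounded by
`(κlj κbf + κlf²)‖d‖² + 2 κbf κej θ⁻¹ ‖d‖ + κbmj² ‖d‖²`. -/
theorem model_error_bound {n m : ℕ}
    (F : EuclideanSpace ℝ (Fin n) → EuclideanSpace ℝ (Fin m))
    (J : EuclideanSpace ℝ (Fin n) → Matrix (Fin m) (Fin n) ℝ)
    (hF : ∀ z, HasFDerivAt F (jacCLM (J z)) z)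
    (κlj κlf κbf : ℝ)
    (hJlip : ∀ y z, opNorm (J y - J z) ≤ κlj * ‖y - z‖)
    (hJb : ∀ y, opNorm (J y) ≤ κlf)
    (hFb : ∀ y, ‖F y‖ ≤ κbf)
    (x : EuclideanSpace ℝ (Fin n)) (θ : ℝ) (hθ : 0 < θ)
    (Jm : Matrix (Fin m) (Fin n) ℝ) (κbmj κej : ℝ)
    (hJmb : opNorm Jm ≤ κbmj)
    (hJmacc : opNorm (Jm - J x) ≤ κej / θ) :
    ∀ d : EuclideanSpace ℝ (Fin n),
      |‖F x + mulVecE Jm d‖ ^ 2 - ‖F (x + d)‖ ^ 2| ≤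
        (κlj * κbf + κlf ^ 2) * ‖d‖ ^ 2 + 2 * κbf * κej * θ⁻¹ * ‖d‖ +
          κbmj ^ 2 * ‖d‖ ^ 2 :=
  model_error_bound_general F J hF κlj κlf κbf hJlip hJb hFb x θ Jm κbmj κej hJmb hJmacc
end
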